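/- arXiv:2303.06297 — 4 statements merged into one kernel-verified Lean document; each statement's English description precedes it below -/
import Mathlib

section
/- Let X be a simple positively weighted graph on n vertices and let u be an apex of the disconnected double cone O₂ ∨ X with Laplacian L. Then U_L(t)_{u,u} = 1/(n+2) + e^{itn}/2 + n e^{it(n+2)}/(2(n+2)), and |U_L(t)_{u,u}|² = (n² + 2n + 4 + h(t))/(2(n+2)²) where h(t) = n(n+2)cos(2t) + 2(n+2)cos(tn) + 2n cos(t(n+2)). -/
/-!
The indicator vector of an apex `u` splits into three eigenvectors of `L`: the all-ones vector
(eigenvalue `0`), the difference of the two apex indicators (eigenvalue `n`) and the vector equal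
to `n` on the apexes and `-2` on `X` (eigenvalue `n + 2`), with coefficients `1/(n+2)`, `1/2` and
`1/(2(n+2))`. Since `exp(itL)` multiplies each eigenvector by a phase, reading off the `u`-entry
gives the formula for `U_L(t)_{u,u}`; its squared modulus is the expansion of
`|a + b e^{ix} + c e^{iy}|²` for real `a, b, c`.
-/

open Complex Matrix

namespace Matrix

variable {m n : Type*} [Fintype m] [DecidableEq m] [Fintype n] [DecidableEq n]

theorem pow_mulVec_of_mulVec_eq_smul {R : Type*} [CommSemiring R] {A : Matrix m m R}
    {v : m → R} {μ : R} (h : A *ᵥ v = μ • v) (k : ℕ) :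
    (A ^ k) *ᵥ v = (μ ^ k) • v := by
  induction k with
  | zero => simp
  | succ k ih => rw [pow_succ', ← mulVec_mulVec, ih, mulVec_smul, h, smul_smul, ← pow_succ]

theorem exp_mulVec_of_mulVec_eq_smul {A : Matrix m m ℂ} {v : m → ℂ} {μ : ℂ}
    (h : A *ᵥ v = μ • v) : NormedSpace.exp A *ᵥ v = Complex.exp μ • v := by
  -- any normed-algebra structure will do: it only serves to sum the exponential series
  let _ : NormedRing (Matrix m m ℂ) := Matrix.linftyOpNormedRing
  let _ : NormedAlgebra ℂ (Matrix m m ℂ) := Matrix.linftyOpNormedAlgebra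
  have hA := (NormedSpace.exp_series_hasSum_exp' (𝕂 := ℂ) A).map (mulVec.addMonoidHomLeft v)
    (continuous_id.matrix_mulVec continuous_const)
  refine hA.unique ?_
  rw [Complex.exp_eq_exp_ℂ]
  convert (NormedSpace.exp_series_hasSum_exp' (𝕂 := ℂ) μ).smul_const v using 1
  ext k : 1
  simp [mulVec.addMonoidHomLeft, smul_mulVec, pow_mulVec_of_mulVec_eq_smul h, smul_smul]

theorem exp_smul_mulVec_of_mulVec_eq_smul {A : Matrix m m ℂ} {v : m → ℂ} {μ : ℂ}
    (h : A *ᵥ v = μ • v) (s : ℂ) :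
    NormedSpace.exp (s • A) *ᵥ v = Complex.exp (s * μ) • v :=
  exp_mulVec_of_mulVec_eq_smul (by rw [smul_mulVec, h, smul_smul])

def laplacian {R : Type*} [Ring R] (A : Matrix m m R) : Matrix m m R :=
  diagonal (fun x => ∑ y, A x y) - A

@[simp]
theorem laplacian_zero {R : Type*} [Ring R] : laplacian (0 : Matrix m m R) = 0 := by
  simp [laplacian]

theorem laplacian_map {R S : Type*} [Ring R] [Ring S] (f : R →+* S) (A : Matrix m m R) :
    (laplacian A).map f = laplacian (A.map f) := by
  ext x y
  simp [laplacian, diagonal_apply, map_sum, apply_ite f]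

section CommRing

variable {R : Type*} [CommRing R]

theorem laplacian_mulVec_const (A : Matrix m m R) (c : R) :
    laplacian A *ᵥ (fun _ => c) = 0 := by
  ext x
  simp only [laplacian, sub_mulVec, mulVec_diagonal, Pi.sub_apply]
  simp [mulVec, dotProduct, Finset.sum_mul]

theorem laplacian_fromBlocks_ones (A : Matrix m m R) (B : Matrix n n R) :
    laplacian (fromBlocks A (of fun _ _ => 1) (of fun _ _ => 1) B) =
      fromBlocks (laplacian A + (Fintype.card n : R) • 1) (-of fun _ _ => 1)
        (-of fun _ _ => 1) (laplacian B + (Fintype.card m : R) • 1) := by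
  ext (x | x) (y | y)
  · by_cases hxy : x = y <;> simp [laplacian, Fintype.sum_sum_type, hxy, add_sub_right_comm]
  · simp [laplacian]
  · simp [laplacian]
  · by_cases hxy : x = y <;>
      simp [laplacian, Fintype.sum_sum_type, hxy, add_sub_right_comm, add_comm]

theorem laplacian_fromBlocks_ones_mulVec_sum_elim_zero {A : Matrix m m R} (B : Matrix n n R)
    {w : m → R} {μ : R} (hw : laplacian A *ᵥ w = μ • w) (hsum : ∑ j, w j = 0) :
    laplacian (fromBlocks A (of fun _ _ => 1) (of fun _ _ => 1) B) *ᵥ Sum.elim w (0 : n → R) =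
      (μ + Fintype.card n) • Sum.elim w (0 : n → R) := by
  rw [laplacian_fromBlocks_ones, fromBlocks_mulVec]
  ext (x | x)
  · simp [add_mulVec, hw, smul_mulVec, add_mul]
  · simp [mulVec, dotProduct, hsum]

theorem laplacian_fromBlocks_ones_mulVec_sum_elim_card (A : Matrix m m R) (B : Matrix n n R) :
    laplacian (fromBlocks A (of fun _ _ => 1) (of fun _ _ => 1) B) *ᵥ
        Sum.elim (fun _ => (Fintype.card n : R)) (fun _ => -(Fintype.card m : R)) =
      ((Fintype.card m : R) + Fintype.card n) •
        Sum.elim (fun _ => (Fintype.card n : R)) (fun _ => -(Fintype.card m : R)) := by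
  rw [laplacian_fromBlocks_ones, fromBlocks_mulVec]
  ext (x | x) <;>
    simp only [Sum.elim_comp_inl, Sum.elim_comp_inr, Sum.elim_inl, Sum.elim_inr, add_mulVec,
      laplacian_mulVec_const, smul_mulVec, one_mulVec, zero_add, neg_of, Pi.add_apply,
      Pi.smul_apply, Pi.neg_apply, mulVec, dotProduct, of_apply, Finset.sum_const,
      Finset.card_univ] <;>
    ring

end CommRing

end Matrix

theorem single_inl_eq_eigenvector_combination (n : ℕ) (i : Fin 2) :
    Pi.single (Sum.inl i : Fin 2 ⊕ Fin n) (1 : ℂ) =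
      ((n : ℂ) + 2)⁻¹ • (fun _ => 1) +
        (2 : ℂ)⁻¹ • Sum.elim (2 • Pi.single i 1 - 1) (0 : Fin n → ℂ) +
        (2 * ((n : ℂ) + 2))⁻¹ • Sum.elim (fun _ => (n : ℂ)) (fun _ => -2) := by
  have : (n : ℂ) + 2 ≠ 0 := by norm_cast
  ext (j | j)
  · by_cases hj : j = i
    · subst hj
      simp only [Pi.single_eq_same, Pi.add_apply, Pi.sub_apply, Pi.smul_apply, Pi.ofNat_apply,
        smul_eq_mul, Sum.elim_inl]
      field_simp
      ring
    · simp only [ne_eq, Sum.inl.injEq, hj, not_false_eq_true, Pi.single_eq_of_ne, Pi.add_apply,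
        Pi.sub_apply, Pi.smul_apply, Pi.ofNat_apply, smul_eq_mul, Sum.elim_inl]
      field_simp
      ring
  · simp

theorem exp_smul_laplacian_doubleCone_apply_inl_inl {n : ℕ} (W : Matrix (Fin n) (Fin n) ℂ)
    (s : ℂ) (i : Fin 2) :
    NormedSpace.exp (s • laplacian (fromBlocks 0 (of fun _ _ => 1) (of fun _ _ => 1) W))
        (Sum.inl i) (Sum.inl i) =
      1 / ((n : ℂ) + 2) + Complex.exp (s * n) / 2 +
        n * Complex.exp (s * (n + 2)) / (2 * (n + 2)) := by
  set L := laplacian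
    (fromBlocks (0 : Matrix (Fin 2) (Fin 2) ℂ) (of fun _ _ => 1) (of fun _ _ => 1) W)
  have hker : L *ᵥ (fun _ => 1) = (0 : ℂ) • fun _ => 1 := by
    rw [laplacian_mulVec_const, zero_smul]
  have hapex := laplacian_fromBlocks_ones_mulVec_sum_elim_zero (A := 0) W
    (w := 2 • Pi.single i 1 - 1) (μ := 0) (by simp) (by fin_cases i <;> simp)
  rw [zero_add, Fintype.card_fin] at hapex
  have hjoin : L *ᵥ Sum.elim (fun _ => (n : ℂ)) (fun _ => -2) =
      ((n : ℂ) + 2) • Sum.elim (fun _ => (n : ℂ)) (fun _ => -2) := by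
    have := laplacian_fromBlocks_ones_mulVec_sum_elim_card (0 : Matrix (Fin 2) (Fin 2) ℂ) W
    rw [Fintype.card_fin, Fintype.card_fin] at this
    simpa [add_comm] using this
  have hcol : NormedSpace.exp (s • L) (Sum.inl i) (Sum.inl i) =
      (NormedSpace.exp (s • L) *ᵥ Pi.single (Sum.inl i) 1) (Sum.inl i) := by simp
  rw [hcol, single_inl_eq_eigenvector_combination, mulVec_add, mulVec_add, mulVec_smul,
    mulVec_smul, mulVec_smul, exp_smul_mulVec_of_mulVec_eq_smul hker,
    exp_smul_mulVec_of_mulVec_eq_smul hapex, exp_smul_mulVec_of_mulVec_eq_smul hjoin]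
  simp only [mul_zero, exp_zero, Pi.add_apply, Pi.sub_apply, Pi.smul_apply, Pi.ofNat_apply,
    smul_eq_mul, Sum.elim_inl, Pi.single_eq_same]
  field_simp
  ring

theorem Complex.sq_norm_ofReal_add_mul_exp_add_mul_exp (a b c x y : ℝ) :
    ‖(a : ℂ) + b * exp (x * I) + c * exp (y * I)‖ ^ 2 =
      a ^ 2 + b ^ 2 + c ^ 2 + 2 * a * b * Real.cos x + 2 * a * c * Real.cos y +
        2 * b * c * Real.cos (y - x) := by
  rw [Complex.sq_norm, Complex.normSq_apply]
  simp only [add_re, add_im, mul_re, mul_im, ofReal_re, ofReal_im, exp_ofReal_mul_I_re,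
    exp_ofReal_mul_I_im, Real.cos_sub]
  nlinarith [Real.sin_sq_add_cos_sq x, Real.sin_sq_add_cos_sq y]

theorem stmt_12_general (n : ℕ)
    (W : Matrix (Fin n) (Fin n) ℝ)
    (Adj : Matrix (Fin 2 ⊕ Fin n) (Fin 2 ⊕ Fin n) ℝ)
    (hAdj : Adj = Matrix.fromBlocks 0
      (Matrix.of fun _ _ => 1) (Matrix.of fun _ _ => 1) W)
    (L : Matrix (Fin 2 ⊕ Fin n) (Fin 2 ⊕ Fin n) ℂ)
    (hL : L = (Matrix.diagonal (fun x => ∑ y, Adj x y) - Adj).map Complex.ofReal)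
    (i : Fin 2) (t : ℝ) :
    (NormedSpace.exp ((Complex.I * t) • L)) (Sum.inl i) (Sum.inl i) =
        1 / ((n : ℂ) + 2) + Complex.exp (Complex.I * t * n) / 2 +
          (n : ℂ) * Complex.exp (Complex.I * t * ((n : ℕ) + 2)) / (2 * ((n : ℂ) + 2)) ∧
    ‖((NormedSpace.exp ((Complex.I * t) • L)) (Sum.inl i) (Sum.inl i))‖ ^ 2 =
      ((n : ℝ) ^ 2 + 2 * n + 4 +
        ((n : ℝ) * (n + 2) * Real.cos (2 * t) + 2 * ((n : ℝ) + 2) * Real.cos (t * n) +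
          2 * (n : ℝ) * Real.cos (t * (n + 2)))) / (2 * ((n : ℝ) + 2) ^ 2) := by
  have hL' : L = laplacian (fromBlocks 0 (of fun _ _ => 1) (of fun _ _ => 1) (W.map ofReal)) := by
    rw [hL, ← laplacian, hAdj]
    refine (laplacian_map ofRealHom _).trans ?_
    congr 1
    ext (a | a) (b | b) <;> simp
  have hentry := hL' ▸ exp_smul_laplacian_doubleCone_apply_inl_inl (W.map ofReal) (I * t) i
  refine ⟨hentry, ?_⟩
  have hreal : 1 / ((n : ℂ) + 2) + exp (I * t * n) / 2 +
      n * exp (I * t * (n + 2)) / (2 * (n + 2)) =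
      ((1 / (n + 2) : ℝ) : ℂ) + ((1 / 2 : ℝ) : ℂ) * exp ((t * n : ℝ) * I) +
        ((n / (2 * (n + 2)) : ℝ) : ℂ) * exp ((t * (n + 2) : ℝ) * I) := by
    push_cast
    ring_nf
  rw [hentry, hreal, sq_norm_ofReal_add_mul_exp_add_mul_exp,
    show t * (n + 2) - t * n = 2 * t by ring]
  field_simp
  ring

/-- For an apex `u` of the disconnected double cone `O₂ ∨ X` (`X` simple positively
weighted on `n` vertices) with Laplacian `L`:
`U_L(t)_{u,u} = 1/(n+2) + e^{itn}/2 + n e^{it(n+2)}/(2(n+2))`, and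
`|U_L(t)_{u,u}|² = (n² + 2n + 4 + h(t))/(2(n+2)²)` where
`h(t) = n(n+2)cos(2t) + 2(n+2)cos(tn) + 2n cos(t(n+2))`. -/
theorem stmt_12 (n : ℕ) (hn : 1 ≤ n)
    (W : Matrix (Fin n) (Fin n) ℝ) (hWs : W.IsSymm)
    (hW0 : ∀ i, W i i = 0) (hWpos : ∀ i j, 0 ≤ W i j)
    (Adj : Matrix (Fin 2 ⊕ Fin n) (Fin 2 ⊕ Fin n) ℝ)
    (hAdj : Adj = Matrix.fromBlocks 0
      (Matrix.of fun _ _ => 1) (Matrix.of fun _ _ => 1) W)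
    (L : Matrix (Fin 2 ⊕ Fin n) (Fin 2 ⊕ Fin n) ℂ)
    (hL : L = (Matrix.diagonal (fun x => ∑ y, Adj x y) - Adj).map Complex.ofReal)
    (i : Fin 2) (t : ℝ) :
    (NormedSpace.exp ((Complex.I * t) • L)) (Sum.inl i) (Sum.inl i) =
        1 / ((n : ℂ) + 2) + Complex.exp (Complex.I * t * n) / 2 +
          (n : ℂ) * Complex.exp (Complex.I * t * ((n : ℕ) + 2)) / (2 * ((n : ℂ) + 2)) ∧
    ‖((NormedSpace.exp ((Complex.I * t) • L)) (Sum.inl i) (Sum.inl i))‖ ^ 2 =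
      ((n : ℝ) ^ 2 + 2 * n + 4 +
        ((n : ℝ) * (n + 2) * Real.cos (2 * t) + 2 * ((n : ℝ) + 2) * Real.cos (t * n) +
          2 * (n : ℝ) * Real.cos (t * (n + 2)))) / (2 * ((n : ℝ) + 2) ^ 2) :=
  stmt_12_general n W Adj hAdj L hL i t
end

section
/- Let u be a leaf of the star K_{1,n} with n ≥ 2, and A its adjacency matrix. Then |U_A(t)_{u,u}| ≥ 1 − 2/n for all t, with equality if and only if t = jπ/√n for some odd integer j. -/
/-!
Put `c = √n` and `b = A / c`. Since `A³ = n A`, the matrix `b` satisfies `b³ = b`, so its odd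
powers equal `b` and its nonzero even powers equal `b²`; splitting the exponential series into
even and odd terms gives `exp (z b) = 1 - b² + cosh z • b² + sinh z • b`. At a leaf `b` vanishes
on the diagonal and `b² = 1/n`, so `U_A(t)_{u,u} = (n - 1 + cos (t√n)) / n`. This exceeds
`1 - 2/n` by `(1 + cos (t√n)) / n ≥ 0`, with equality exactly when `cos (t√n) = -1`.
-/

open Complex Matrix

section PowThree

variable {M : Type*} [Monoid M] {b : M}

theorem pow_two_mul_add_one_of_pow_three_eq_self (hb : b ^ 3 = b) (m : ℕ) :
    b ^ (2 * m + 1) = b := by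
  induction m with
  | zero => simp
  | succ m ih => rw [show 2 * (m + 1) + 1 = 2 * m + 1 + 2 by ring, pow_add, ih, ← pow_succ', hb]

theorem pow_two_mul_add_two_of_pow_three_eq_self (hb : b ^ 3 = b) (m : ℕ) :
    b ^ (2 * m + 2) = b ^ 2 := by
  rw [pow_succ, pow_two_mul_add_one_of_pow_three_eq_self hb, sq]

end PowThree

section ExpPowThree

variable {𝔸 : Type*} [Ring 𝔸] [Algebra ℂ 𝔸] [TopologicalSpace 𝔸] [IsTopologicalRing 𝔸]
  [ContinuousSMul ℂ 𝔸] [T2Space 𝔸] {b : 𝔸}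

open Nat in
theorem NormedSpace.exp_smul_of_pow_three_eq_self (hb : b ^ 3 = b) (z : ℂ) :
    NormedSpace.exp (z • b) = 1 - b ^ 2 + cosh z • b ^ 2 + sinh z • b := by
  rw [NormedSpace.exp_eq_tsum ℂ]
  refine HasSum.tsum_eq ?_
  have hterm (k : ℕ) : ((k ! : ℂ)⁻¹) • (z • b) ^ k = (z ^ k / k !) • b ^ k := by
    rw [smul_pow, smul_smul, inv_mul_eq_div]
  simp_rw [hterm]
  refine HasSum.even_add_odd ?_ ?_
  · have heven (m : ℕ) : (z ^ (2 * m) / (2 * m)! : ℂ) • b ^ (2 * m) =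
        (if m = 0 then 1 - b ^ 2 else 0) + (z ^ (2 * m) / (2 * m)! : ℂ) • b ^ 2 := by
      rcases m with _ | m
      · simp
      · rw [mul_add_one, pow_two_mul_add_two_of_pow_three_eq_self hb]; simp
    simp_rw [heven]
    exact (hasSum_ite_eq 0 _).add ((hasSum_cosh z).smul_const _)
  · simp_rw [pow_two_mul_add_one_of_pow_three_eq_self hb]
    exact (hasSum_sinh z).smul_const b

end ExpPowThree

section StarGraph

variable (R : Type*) [Semiring R] (n : ℕ)

def starAdjacency : Matrix (Unit ⊕ Fin n) (Unit ⊕ Fin n) R :=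
  fromBlocks 0 (of fun _ _ => 1) (of fun _ _ => 1) 0

theorem starAdjacency_pow_three : starAdjacency R n ^ 3 = (n : R) • starAdjacency R n := by
  ext (i | i) (j | j) <;>
    simp [starAdjacency, pow_succ, Matrix.mul_apply]

theorem starAdjacency_apply_inr_inr (u v : Fin n) :
    starAdjacency R n (.inr u) (.inr v) = 0 := by
  simp [starAdjacency]

theorem starAdjacency_sq_apply_inr_inr (u v : Fin n) :
    (starAdjacency R n ^ 2) (.inr u) (.inr v) = 1 := by
  simp [starAdjacency, sq, Matrix.mul_apply]

end StarGraph

theorem Real.cos_eq_neg_one_iff_exists_odd {x : ℝ} :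
    cos x = -1 ↔ ∃ j : ℤ, Odd j ∧ x = j * Real.pi := by
  rw [Real.cos_eq_neg_one_iff]
  constructor
  · rintro ⟨k, rfl⟩
    exact ⟨2 * k + 1, odd_two_mul_add_one k, by push_cast; ring⟩
  · rintro ⟨j, ⟨k, rfl⟩, rfl⟩
    exact ⟨k, by push_cast; ring⟩

theorem exp_I_mul_smul_starAdjacency_apply_inr_self {n : ℕ} (hn : n ≠ 0) (u : Fin n) (t : ℝ) :
    NormedSpace.exp ((I * t) • starAdjacency ℂ n) (.inr u) (.inr u) =
      (((n - 1 + Real.cos (t * Real.sqrt n)) / n : ℝ) : ℂ) := by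
  set c : ℂ := ((Real.sqrt n : ℝ) : ℂ)
  have hc2 : c ^ 2 = n := by
    rw [← ofReal_pow, Real.sq_sqrt n.cast_nonneg, ofReal_natCast]
  have hc : c ≠ 0 := ofReal_ne_zero.mpr (Real.sqrt_ne_zero'.mpr (by positivity))
  set b := c⁻¹ • starAdjacency ℂ n
  have hb : b ^ 3 = b := by
    rw [smul_pow, starAdjacency_pow_three, smul_smul, ← hc2]
    congr 1
    field_simp
  have hscale : (I * t) • starAdjacency ℂ n = (t * c * I) • b := by
    rw [smul_smul]
    congr 1
    field_simp
  rw [hscale, NormedSpace.exp_smul_of_pow_three_eq_self hb, cosh_mul_I]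
  simp only [b, Matrix.add_apply, Matrix.sub_apply, Matrix.smul_apply, one_apply_eq, smul_pow,
    inv_pow, hc2, starAdjacency_apply_inr_inr, starAdjacency_sq_apply_inr_inr, smul_eq_mul,
    mul_one, mul_zero, add_zero, ofReal_div, ofReal_add, ofReal_sub, ofReal_natCast, ofReal_one,
    ofReal_cos, ofReal_mul]
  field_simp
  rfl

/-- For a leaf `u` of the star `K_{1,n}` (`n ≥ 2`) with adjacency matrix `A`,
`|U_A(t)_{u,u}| ≥ 1 − 2/n` for all `t`, with equality iff `t = jπ/√n` for odd `j`. -/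
theorem stmt_14 (n : ℕ) (hn : 2 ≤ n)
    (A : Matrix (Unit ⊕ Fin n) (Unit ⊕ Fin n) ℂ)
    (hA : A = Matrix.fromBlocks 0
      (Matrix.of fun _ _ => 1) (Matrix.of fun _ _ => 1) 0)
    (u : Fin n) (t : ℝ) :
    1 - 2 / (n : ℝ) ≤
      ‖(NormedSpace.exp ((Complex.I * t) • A)) (Sum.inr u) (Sum.inr u)‖ ∧
    (‖(NormedSpace.exp ((Complex.I * t) • A)) (Sum.inr u) (Sum.inr u)‖ =
        1 - 2 / (n : ℝ) ↔
      ∃ j : ℤ, Odd j ∧ t = j * Real.pi / Real.sqrt n) := by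
  have hn₀ : (0 : ℝ) < n := by positivity
  have hn₂ : (2 : ℝ) ≤ n := by exact_mod_cast hn
  have hcos := Real.neg_one_le_cos (t * Real.sqrt n)
  change A = starAdjacency ℂ n at hA
  rw [hA, exp_I_mul_smul_starAdjacency_apply_inr_self (by omega), norm_real,
    Real.norm_of_nonneg (by apply div_nonneg <;> linarith)]
  have hsplit : (n - 1 + Real.cos (t * Real.sqrt n)) / n =
      1 - 2 / n + (1 + Real.cos (t * Real.sqrt n)) / n := by
    field_simp
    ring
  rw [hsplit, add_eq_left, div_eq_zero_iff, or_iff_left hn₀.ne', add_eq_zero_iff_eq_neg',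
    Real.cos_eq_neg_one_iff_exists_odd]
  refine ⟨le_add_of_nonneg_right (by apply div_nonneg <;> linarith), ?_⟩
  simp_rw [eq_div_iff (Real.sqrt_pos.mpr hn₀).ne']
end

section
/- Let m ≥ 3, X a simple positively weighted graph on n ≥ 1 vertices with ν₂(m) = ν₂(n) (equal 2-adic valuations), and u a vertex of O_m in O_m ∨ X with Laplacian transition U_L(t)_{u,u} = 1/(m+n) + ((m−1)/m)e^{itn} + (n/(m(m+n)))e^{it(m+n)}. Then |U_L(t₁)_{u,u}| = 1 − 2/m whenever t₁ = jπ/gcd(m,n) for an odd integer j. -/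
/-!
In `O_m ∨ X` the Laplacian has the eigenvectors: the constant vector (eigenvalue `0`), the
vector equal to `n` on `O_m` and `-m` on `X` (eigenvalue `m + n`), and every vector supported
on `O_m` with zero sum (eigenvalue `n`). Expanding the basis vector `e_u` along them gives
`U_L(t)_{u,u} = 1/(m+n) + ((m-1)/m) e^{itn} + (n/(m(m+n))) e^{it(m+n)}`.
When `ν₂(m) = ν₂(n)` both `m/g` and `n/g` are odd, so at `t₁ = jπ/g` the two exponentials are
`-1` and `1`, and the entry is `2/m - 1`.
-/

open Complex Matrix

theorem Matrix.exp_mulVec_of_mulVec_eq_smul_s17 {𝕂 ι : Type*} [RCLike 𝕂] [Fintype ι] [DecidableEq ι]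
    {M : Matrix ι ι 𝕂} {v : ι → 𝕂} {μ : 𝕂} (h : M *ᵥ v = μ • v) :
    NormedSpace.exp M *ᵥ v = NormedSpace.exp μ • v := by
  -- any submultiplicative norm will do: it only serves to make the exponential series converge
  let _ : NormedRing (Matrix ι ι 𝕂) := Matrix.linftyOpNormedRing
  let _ : NormedAlgebra 𝕂 (Matrix ι ι 𝕂) := Matrix.linftyOpNormedAlgebra
  have _ : ProperSpace (Matrix ι ι 𝕂) := FiniteDimensional.proper_rclike 𝕂 _
  have hpow (k : ℕ) : M ^ k *ᵥ v = μ ^ k • v := by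
    induction k with
    | zero => simp
    | succ k ih => rw [pow_succ, ← mulVec_mulVec, h, mulVec_smul, ih, smul_smul, pow_succ']
  have hM := (NormedSpace.exp_series_hasSum_exp' (𝕂 := 𝕂) M).mapL
    (LinearMap.toContinuousLinearMap ((mulVecBilin 𝕂 𝕂).flip v))
  refine hM.unique ?_
  simpa [hpow, smul_smul] using (NormedSpace.exp_series_hasSum_exp' (𝕂 := 𝕂) μ).smul_const v

section Laplacian

variable {ι : Type*} [Fintype ι] [DecidableEq ι]

noncomputable def weightedLaplacian (A : Matrix ι ι ℝ) : Matrix ι ι ℂ :=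
  (diagonal (fun x => ∑ y, A x y) - A).map ofReal

theorem weightedLaplacian_mulVec_apply (A : Matrix ι ι ℝ) (v : ι → ℂ) (x : ι) :
    (weightedLaplacian A *ᵥ v) x = ∑ y, A x y * (v x - v y) := by
  simp [weightedLaplacian, mulVec, dotProduct, diagonal_apply, sub_mul, mul_sub,
    Finset.sum_sub_distrib, apply_ite ofReal, ite_mul, Finset.sum_mul]

theorem weightedLaplacian_mulVec_const (A : Matrix ι ι ℝ) (c : ℂ) :
    weightedLaplacian A *ᵥ (fun _ => c) = 0 := by
  ext x
  simp [weightedLaplacian_mulVec_apply]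

end Laplacian

section Join

variable {α β : Type*} [Fintype α] [Fintype β] [DecidableEq α] [DecidableEq β]

/-- The weighted adjacency matrix of the join `O_α ∨ X`, where `W` is that of `X`. -/
def joinAdj (α : Type*) (W : Matrix β β ℝ) : Matrix (α ⊕ β) (α ⊕ β) ℝ :=
  fromBlocks 0 (of fun _ _ => 1) (of fun _ _ => 1) W

theorem weightedLaplacian_joinAdj_mulVec_inl (W : Matrix β β ℝ) (v : α ⊕ β → ℂ) (k : α) :
    (weightedLaplacian (joinAdj α W) *ᵥ v) (.inl k) = ∑ r, (v (.inl k) - v (.inr r)) := by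
  simp [weightedLaplacian_mulVec_apply, joinAdj, Fintype.sum_sum_type]

theorem weightedLaplacian_joinAdj_mulVec_inr (W : Matrix β β ℝ) (v : α ⊕ β → ℂ) (k : β) :
    (weightedLaplacian (joinAdj α W) *ᵥ v) (.inr k) =
      ∑ l, (v (.inr k) - v (.inl l)) + ∑ r, W k r * (v (.inr k) - v (.inr r)) := by
  simp [weightedLaplacian_mulVec_apply, joinAdj, Fintype.sum_sum_type]

theorem weightedLaplacian_joinAdj_mulVec_elim_card (W : Matrix β β ℝ) :
    weightedLaplacian (joinAdj α W) *ᵥ Sum.elim (fun _ => (Fintype.card β : ℂ))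
        (fun _ => -(Fintype.card α : ℂ)) =
      ((Fintype.card α : ℂ) + Fintype.card β) • Sum.elim (fun _ => (Fintype.card β : ℂ))
        (fun _ => -(Fintype.card α : ℂ)) := by
  ext (k | k)
  · simp only [weightedLaplacian_joinAdj_mulVec_inl, Sum.elim_inl, Sum.elim_inr, sub_neg_eq_add,
      Finset.sum_const, Finset.card_univ, nsmul_eq_mul, Pi.smul_apply, smul_eq_mul]
    ring
  · simp only [weightedLaplacian_joinAdj_mulVec_inr, Sum.elim_inr, Sum.elim_inl, sub_self,
      mul_zero, Finset.sum_const_zero, add_zero, Finset.sum_const, Finset.card_univ,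
      nsmul_eq_mul, Pi.smul_apply, smul_eq_mul]
    ring

theorem weightedLaplacian_joinAdj_mulVec_elim_zero (W : Matrix β β ℝ) {f : α → ℂ}
    (hf : ∑ l, f l = 0) :
    weightedLaplacian (joinAdj α W) *ᵥ Sum.elim f 0 = (Fintype.card β : ℂ) • Sum.elim f 0 := by
  ext (k | k)
  · simp [weightedLaplacian_joinAdj_mulVec_inl, mul_comm]
  · simp [weightedLaplacian_joinAdj_mulVec_inr, hf]

theorem Pi.single_inl_eq_smul_const_add_smul_elim_add_elim [Nonempty α] (i : α) :
    Pi.single (Sum.inl i : α ⊕ β) (1 : ℂ) =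
      ((Fintype.card α : ℂ) + Fintype.card β)⁻¹ • (fun _ => 1) +
      ((Fintype.card α : ℂ) * (Fintype.card α + Fintype.card β))⁻¹ •
        Sum.elim (fun _ => (Fintype.card β : ℂ)) (fun _ => -(Fintype.card α : ℂ)) +
      Sum.elim (fun k => (Pi.single i 1 : α → ℂ) k - (Fintype.card α : ℂ)⁻¹) 0 := by
  have hm : (Fintype.card α : ℂ) ≠ 0 := by simp
  have hmn : (Fintype.card α : ℂ) + Fintype.card β ≠ 0 := by
    norm_cast
    have := Fintype.card_pos (α := α)
    omega
  ext (k | k)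
  · rcases eq_or_ne k i with rfl | hk
    · simp only [single_eq_same, add_apply, smul_apply, smul_eq_mul, mul_one, Sum.elim_inl]
      field_simp
      ring
    · simp only [ne_eq, Sum.inl.injEq, hk, not_false_eq_true, single_eq_of_ne, add_apply,
        smul_apply, smul_eq_mul, mul_one, Sum.elim_inl, zero_sub]
      field_simp
      ring
  · simp

theorem exp_weightedLaplacian_joinAdj_apply_inl_inl (W : Matrix β β ℝ) (i : α) (t : ℝ) :
    NormedSpace.exp ((I * t) • weightedLaplacian (joinAdj α W)) (.inl i) (.inl i) =
      1 / (Fintype.card α + Fintype.card β) +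
      (Fintype.card α - 1) / Fintype.card α * exp (I * t * Fintype.card β) +
      Fintype.card β / (Fintype.card α * (Fintype.card α + Fintype.card β)) *
        exp (I * t * (Fintype.card α + Fintype.card β)) := by
  have : Nonempty α := ⟨i⟩
  have hm : (Fintype.card α : ℂ) ≠ 0 := by simp
  have hmn : (Fintype.card α : ℂ) + Fintype.card β ≠ 0 := by
    norm_cast
    have := Fintype.card_pos (α := α)
    omega
  set M := (I * t) • weightedLaplacian (joinAdj α W)
  have exp_M_mulVec {v : α ⊕ β → ℂ} {μ : ℂ}
      (hv : weightedLaplacian (joinAdj α W) *ᵥ v = μ • v) :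
      NormedSpace.exp M *ᵥ v = exp (I * t * μ) • v := by
    rw [exp_eq_exp_ℂ]
    exact exp_mulVec_of_mulVec_eq_smul_s17 (by rw [smul_mulVec, hv, smul_smul])
  have hf : ∑ k, ((Pi.single i 1 : α → ℂ) k - (Fintype.card α : ℂ)⁻¹) = 0 := by
    simp [Finset.sum_sub_distrib, hm]
  rw [← col_apply (NormedSpace.exp M), ← mulVec_single_one,
    Pi.single_inl_eq_smul_const_add_smul_elim_add_elim, mulVec_add, mulVec_add, mulVec_smul,
    mulVec_smul, exp_M_mulVec (μ := 0) (by rw [zero_smul, weightedLaplacian_mulVec_const]),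
    exp_M_mulVec (weightedLaplacian_joinAdj_mulVec_elim_card W),
    exp_M_mulVec (weightedLaplacian_joinAdj_mulVec_elim_zero W hf)]
  simp only [mul_zero, exp_zero, one_smul, Pi.add_apply, Pi.smul_apply, smul_eq_mul, mul_one,
    Sum.elim_inl, Pi.single_eq_same]
  field_simp
  ring

end Join

theorem Nat.odd_div_gcd_of_padicValNat_two_eq {m n : ℕ} (hn : n ≠ 0)
    (h : padicValNat 2 m = padicValNat 2 n) : Odd (n / m.gcd n) := by
  rw [← Nat.not_even_iff_odd, even_iff_two_dvd]
  intro htwo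
  have hpow : 2 ^ padicValNat 2 n ∣ m.gcd n :=
    Nat.dvd_gcd (h ▸ pow_padicValNat_dvd) pow_padicValNat_dvd
  refine pow_succ_padicValNat_not_dvd (p := 2) hn ?_
  calc 2 ^ (padicValNat 2 n + 1) = 2 ^ padicValNat 2 n * 2 := pow_succ _ _
    _ ∣ m.gcd n * (n / m.gcd n) := mul_dvd_mul hpow htwo
    _ = n := Nat.mul_div_cancel' (Nat.gcd_dvd_right m n)

theorem Complex.exp_I_mul_odd_mul_pi_div_of_dvd {j : ℤ} (hj : Odd j) {g k : ℕ} (hg : g ≠ 0)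
    (hgk : g ∣ k) : exp (I * ↑(j * Real.pi / g) * k) = (-1) ^ (k / g) := by
  obtain ⟨q, rfl⟩ := hgk
  have hexponent : I * ↑(j * Real.pi / g) * ↑(g * q) = ↑(j * q) * (Real.pi * I) := by
    push_cast
    field_simp
  rw [hexponent, exp_int_mul, exp_pi_mul_I, _root_.zpow_mul, hj.neg_one_zpow,
    Nat.mul_div_cancel_left _ (Nat.pos_of_ne_zero hg), zpow_natCast]

theorem stmt_17_general (m n : ℕ) (hm : 3 ≤ m) (hn : 1 ≤ n)
    (hnu : padicValNat 2 m = padicValNat 2 n)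
    (W : Matrix (Fin n) (Fin n) ℝ)
    (Adj : Matrix (Fin m ⊕ Fin n) (Fin m ⊕ Fin n) ℝ)
    (hAdj : Adj = Matrix.fromBlocks 0
      (Matrix.of fun _ _ => 1) (Matrix.of fun _ _ => 1) W)
    (L : Matrix (Fin m ⊕ Fin n) (Fin m ⊕ Fin n) ℂ)
    (hL : L = (Matrix.diagonal (fun x => ∑ y, Adj x y) - Adj).map Complex.ofReal)
    (i : Fin m) (j : ℤ) (hj : Odd j) (t₁ : ℝ)
    (ht₁ : t₁ = j * Real.pi / (Nat.gcd m n : ℝ)) :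
    ‖(NormedSpace.exp ((Complex.I * t₁) • L)) (Sum.inl i) (Sum.inl i)‖ =
      1 - 2 / (m : ℝ) := by
  have hL' : L = weightedLaplacian (joinAdj (Fin m) W) := by rw [hL, hAdj]; rfl
  have hg : m.gcd n ≠ 0 := Nat.gcd_ne_zero_right (by omega)
  have hn_odd : Odd (n / m.gcd n) := Nat.odd_div_gcd_of_padicValNat_two_eq (by omega) hnu
  have hm_odd : Odd (m / m.gcd n) := by
    simpa [Nat.gcd_comm] using Nat.odd_div_gcd_of_padicValNat_two_eq (by omega) hnu.symm
  have hmn_even : Even ((m + n) / m.gcd n) := by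
    rw [Nat.add_div_of_dvd_right (Nat.gcd_dvd_left m n)]
    exact hm_odd.add_odd hn_odd
  have hexp_n : exp (I * t₁ * n) = -1 := by
    rw [ht₁, exp_I_mul_odd_mul_pi_div_of_dvd hj hg (Nat.gcd_dvd_right m n), hn_odd.neg_one_pow]
  have hexp_mn : exp (I * t₁ * (m + n)) = 1 := by
    rw [← Nat.cast_add, ht₁, exp_I_mul_odd_mul_pi_div_of_dvd hj hg
      (dvd_add (Nat.gcd_dvd_left m n) (Nat.gcd_dvd_right m n)), hmn_even.neg_one_pow]
  rw [hL', exp_weightedLaplacian_joinAdj_apply_inl_inl, Fintype.card_fin, Fintype.card_fin,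
    hexp_n, hexp_mn]
  have hentry : (1 / (m + n) + (m - 1) / m * -1 + n / (m * (m + n)) * 1 : ℂ) =
      -((1 - 2 / m : ℝ) : ℂ) := by
    have hm0 : (m : ℂ) ≠ 0 := by norm_cast; omega
    have hmn0 : (m : ℂ) + n ≠ 0 := by norm_cast; omega
    push_cast
    field_simp
    ring
  have hnonneg : 0 ≤ 1 - 2 / (m : ℝ) := by
    rw [sub_nonneg, div_le_one (by positivity)]
    exact_mod_cast (by omega : 2 ≤ m)
  rw [hentry, norm_neg, norm_real, Real.norm_of_nonneg hnonneg]

/-- Let `m ≥ 3`, `X` simple positively weighted on `n ≥ 1` vertices with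
`ν₂(m) = ν₂(n)`, and `u` a vertex of `O_m` in `O_m ∨ X` with Laplacian `L`. Then
`|U_L(t₁)_{u,u}| = 1 − 2/m` whenever `t₁ = jπ/gcd(m,n)` for an odd integer `j`. -/
theorem stmt_17 (m n : ℕ) (hm : 3 ≤ m) (hn : 1 ≤ n)
    (hnu : padicValNat 2 m = padicValNat 2 n)
    (W : Matrix (Fin n) (Fin n) ℝ) (hWs : W.IsSymm)
    (hW0 : ∀ i, W i i = 0) (hWpos : ∀ i j, 0 ≤ W i j)
    (Adj : Matrix (Fin m ⊕ Fin n) (Fin m ⊕ Fin n) ℝ)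
    (hAdj : Adj = Matrix.fromBlocks 0
      (Matrix.of fun _ _ => 1) (Matrix.of fun _ _ => 1) W)
    (L : Matrix (Fin m ⊕ Fin n) (Fin m ⊕ Fin n) ℂ)
    (hL : L = (Matrix.diagonal (fun x => ∑ y, Adj x y) - Adj).map Complex.ofReal)
    (i : Fin m) (j : ℤ) (hj : Odd j) (t₁ : ℝ)
    (ht₁ : t₁ = j * Real.pi / (Nat.gcd m n : ℝ)) :
    ‖(NormedSpace.exp ((Complex.I * t₁) • L)) (Sum.inl i) (Sum.inl i)‖ =
      1 - 2 / (m : ℝ) :=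
  stmt_17_general m n hm hn hnu W Adj hAdj L hL i j hj t₁ ht₁
end

section
/- Let n₁,…,n_m ≥ 3 and X = □_{j=1}^m K_{n_j} be the Cartesian product of complete graphs, with adjacency Hamiltonian. Then every vertex w of X satisfies |U(t)_{w,w}| ≥ ∏_{j=1}^m (1 − 2/n_j) for all t. -/
/-!
The adjacency matrix of `□ⱼ K_{nⱼ}` is the Kronecker sum of the factors' adjacency matrices.
Its summands `1 ⊗ ⋯ ⊗ A_j ⊗ ⋯ ⊗ 1` commute, so `U(t)` is the Kronecker product of the
factors' evolutions and `U(t)_{w,w} = ∏ⱼ U_{K_{nⱼ}}(t)_{wⱼ,wⱼ}`. For `K_N = J - 1`, with `J / N`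
idempotent, `U(t)_{u,u} = e^{-it} (N - 1 + e^{itN}) / N`, whose modulus is at least `|N - 2| / N`
by the reverse triangle inequality.
-/

open Matrix NormedSpace SimpleGraph
open scoped Nat

theorem IsIdempotentElem.exp_smul {𝕂 𝔸 : Type*} [RCLike 𝕂] [Ring 𝔸] [Algebra 𝕂 𝔸]
    [TopologicalSpace 𝔸] [IsTopologicalRing 𝔸] [ContinuousSMul 𝕂 𝔸] [T2Space 𝔸] {p : 𝔸}
    (hp : IsIdempotentElem p) (c : 𝕂) :
    exp (c • p) = 1 + (exp c - 1) • p := by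
  have hc := (summable_nat_add_iff 1).mpr (expSeries_summable' (𝕂 := 𝕂) c)
  have hcp : Summable fun k : ℕ => ((k + 1)! ⁻¹ : 𝕂) • (c • p) ^ (k + 1) := by
    simp only [smul_pow, hp.pow_succ_eq, smul_smul]
    exact hc.smul_const p
  rw [exp_eq_tsum 𝕂, exp_eq_tsum 𝕂]
  dsimp only
  rw [tsum_eq_zero_add' (f := fun k => (k ! ⁻¹ : 𝕂) • (c • p) ^ k) hcp,
    (expSeries_summable' c).tsum_eq_zero_add]
  simp only [pow_zero, Nat.factorial_zero, Nat.cast_one, inv_one, one_smul,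
    add_sub_cancel_left, ← hc.tsum_smul_const, smul_pow, hp.pow_succ_eq, smul_smul]
  simp only [smul_eq_mul]

theorem abs_one_sub_two_div_le_norm_one_add_sub_one_div {N : ℝ} (hN : 1 ≤ N) {z : ℂ}
    (hz : ‖z‖ = 1) : |1 - 2 / N| ≤ ‖1 + (z - 1) / N‖ := by
  have hN0 : 0 < N := by linarith
  have h := abs_norm_sub_norm_le ((N - 1 : ℝ) : ℂ) (-z)
  rw [norm_neg, hz, sub_neg_eq_add, Complex.norm_real, Real.norm_of_nonneg (by linarith)] at h
  have hdiv : (1 : ℂ) + (z - 1) / N = ((N - 1 : ℝ) + z) / (N : ℂ) := by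
    have : (N : ℂ) ≠ 0 := by exact_mod_cast hN0.ne'
    field_simp
    push_cast
    ring
  rw [hdiv, norm_div, Complex.norm_real, Real.norm_of_nonneg hN0.le, le_div_iff₀ hN0]
  calc |1 - 2 / N| * N = |N - 1 - 1| := by
        rw [show N - 1 - 1 = (1 - 2 / N) * N by field_simp; ring, abs_mul, abs_of_pos hN0]
    _ ≤ _ := h

namespace Matrix

section piKronecker

variable {ι : Type*} [Fintype ι] {R : Type*} [CommSemiring R]

def piKronecker {U V : ι → Type*} (M : ∀ i, Matrix (U i) (V i) R) :
    Matrix (∀ i, U i) (∀ i, V i) R :=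
  of fun x y => ∏ i, M i (x i) (y i)

@[simp]
theorem piKronecker_apply {U V : ι → Type*} (M : ∀ i, Matrix (U i) (V i) R) (x : ∀ i, U i)
    (y : ∀ i, V i) : piKronecker M x y = ∏ i, M i (x i) (y i) :=
  rfl

theorem piKronecker_mul [DecidableEq ι] {U V W : ι → Type*} [∀ i, Fintype (V i)]
    (M : ∀ i, Matrix (U i) (V i) R) (N : ∀ i, Matrix (V i) (W i) R) :
    piKronecker M * piKronecker N = piKronecker fun i => M i * N i := by
  ext x y
  simp only [mul_apply, piKronecker_apply, Finset.prod_univ_sum, Fintype.piFinset_univ,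
    Finset.prod_mul_distrib]

variable {V : ι → Type*} [∀ i, DecidableEq (V i)]

theorem piKronecker_one : piKronecker (fun i => (1 : Matrix (V i) (V i) R)) = 1 := by
  ext x y
  simp only [piKronecker_apply, one_apply, Fintype.prod_boole, funext_iff]

variable [DecidableEq ι]

theorem piKronecker_mulSingle_apply (j : ι) (e : Matrix (V j) (V j) R) (x y : ∀ i, V i) :
    piKronecker (Pi.mulSingle j e) x y =
      e (x j) (y j) * ∏ i ∈ {j}ᶜ, (1 : Matrix (V i) (V i) R) (x i) (y i) := by
  rw [piKronecker_apply, Fintype.prod_eq_mul_prod_compl j, Pi.mulSingle_eq_same]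
  congr 1
  refine Finset.prod_congr rfl fun i hi => ?_
  rw [Pi.mulSingle_eq_of_ne (by simpa using hi)]

theorem continuous_piKronecker_mulSingle [TopologicalSpace R] [IsTopologicalSemiring R] (j : ι) :
    Continuous fun e : Matrix (V j) (V j) R => piKronecker (Pi.mulSingle j e) := by
  refine continuous_matrix fun x y => ?_
  simp only [piKronecker_mulSingle_apply]
  fun_prop

theorem smul_piKronecker_mulSingle (j : ι) (c : R) (e : Matrix (V j) (V j) R) :
    c • piKronecker (Pi.mulSingle j e) = piKronecker (Pi.mulSingle j (c • e)) := by
  ext x y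
  simp only [smul_apply, piKronecker_mulSingle_apply, smul_eq_mul, mul_assoc]

/-- `piKronecker (Pi.mulSingle j (M j))` is `1 ⊗ ⋯ ⊗ M j ⊗ ⋯ ⊗ 1`. -/
def piKroneckerSum (M : ∀ i, Matrix (V i) (V i) R) : Matrix (∀ i, V i) (∀ i, V i) R :=
  ∑ j, piKronecker (Pi.mulSingle j (M j))

theorem smul_piKroneckerSum (c : R) (M : ∀ i, Matrix (V i) (V i) R) :
    c • piKroneckerSum M = piKroneckerSum fun i => c • M i := by
  simp only [piKroneckerSum, Finset.smul_sum, smul_piKronecker_mulSingle]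

theorem piKroneckerSum_adjMatrix_completeGraph :
    piKroneckerSum (fun i => (completeGraph (V i)).adjMatrix R) =
      of fun x y => if (Finset.univ.filter fun j => x j ≠ y j).card = 1 then 1 else 0 := by
  ext x y
  have hterm (j : ι) : piKronecker (Pi.mulSingle j ((completeGraph (V j)).adjMatrix R)) x y =
      if (Finset.univ.filter fun i => x i ≠ y i) = {j} then 1 else 0 := by
    simp only [piKronecker_mulSingle_apply, adjMatrix_apply, top_adj, one_apply,
      Finset.prod_boole, Finset.eq_singleton_iff_unique_mem, Finset.mem_filter, Finset.mem_univ,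
      true_and, Finset.mem_compl, Finset.mem_singleton, ite_zero_mul_ite_zero, mul_one]
    exact if_congr (and_congr_right fun _ => forall_congr' fun i => not_imp_comm) rfl rfl
  rw [piKroneckerSum, sum_apply, Fintype.sum_congr _ _ hterm, of_apply]
  split_ifs with hD
  · obtain ⟨j, hj⟩ := Finset.card_eq_one.mp hD
    simp [hj]
  · exact Finset.sum_eq_zero fun j _ => if_neg fun hj => hD (by rw [hj, Finset.card_singleton])

variable [∀ i, Fintype (V i)]

def piKroneckerHom : (∀ i, Matrix (V i) (V i) R) →* Matrix (∀ i, V i) (∀ i, V i) R where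
  toFun := piKronecker
  map_one' := piKronecker_one
  map_mul' M N := (piKronecker_mul M N).symm

theorem commute_piKronecker_mulSingle {i j : ι} (hij : i ≠ j) (e : Matrix (V i) (V i) R)
    (f : Matrix (V j) (V j) R) :
    Commute (piKronecker (Pi.mulSingle i e)) (piKronecker (Pi.mulSingle j f)) :=
  (Pi.mulSingle_commute (f := fun i => Matrix (V i) (V i) R) hij e f).map piKroneckerHom

def piKroneckerMulSingleHom (j : ι) :
    Matrix (V j) (V j) R →+* Matrix (∀ i, V i) (∀ i, V i) R where
  toFun e := piKronecker (Pi.mulSingle j e)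
  map_one' := by rw [Pi.mulSingle_one]; exact piKronecker_one
  map_mul' e f := by rw [Pi.mulSingle_mul]; exact map_mul piKroneckerHom _ _
  map_zero' := by ext x y; simp only [piKronecker_mulSingle_apply, zero_apply, zero_mul]
  map_add' e f := by ext x y; simp only [piKronecker_mulSingle_apply, add_apply, add_mul]

end piKronecker

section exp

open scoped Norms.Operator

variable {ι : Type*} [Fintype ι] [DecidableEq ι] {V : ι → Type*} [∀ i, Fintype (V i)]
  [∀ i, DecidableEq (V i)] {𝕜 : Type*} [RCLike 𝕜]

theorem exp_piKronecker_mulSingle (j : ι) (e : Matrix (V j) (V j) 𝕜) :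
    exp (piKronecker (Pi.mulSingle j e)) = piKronecker (Pi.mulSingle j (exp e)) :=
  (map_exp (piKroneckerMulSingleHom j) (continuous_piKronecker_mulSingle j) e).symm

theorem exp_piKroneckerSum (M : ∀ i, Matrix (V i) (V i) 𝕜) :
    exp (piKroneckerSum M) = piKronecker fun i => exp (M i) := by
  rw [piKroneckerSum, Matrix.exp_sum_of_commute]
  · simp_rw [exp_piKronecker_mulSingle]
    rw [← Finset.noncommProd_mulSingle fun i => exp (M i)]
    exact (Finset.map_noncommProd _ _ _ (piKroneckerHom (V := V) (R := 𝕜))).symm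
  · intro i _ j _ hij
    exact commute_piKronecker_mulSingle hij _ _

end exp

theorem isIdempotentElem_inv_card_smul_of_one {V K : Type*} [Fintype V] [Nonempty V] [Field K]
    [CharZero K] : IsIdempotentElem ((Fintype.card V : K)⁻¹ • of 1 : Matrix V V K) := by
  ext a b
  simp [mul_apply]

end Matrix

namespace SimpleGraph

variable {V : Type*} [Fintype V] [DecidableEq V]

theorem exp_smul_adjMatrix_completeGraph [Nonempty V] (c : ℂ) :
    exp (c • (completeGraph V).adjMatrix ℂ) =
      Complex.exp (-c) •
        (1 + ((Complex.exp (c * Fintype.card V) - 1) / Fintype.card V) • of 1) := by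
  set N : ℂ := (Fintype.card V : ℂ)
  have hN : N ≠ 0 := by simp [N]
  have hK : c • (completeGraph V).adjMatrix ℂ = (c * N) • (N⁻¹ • of 1) + (-c) • 1 := by
    rw [adjMatrix_completeGraph_eq_of_one_sub_one, smul_smul, mul_assoc, mul_inv_cancel₀ hN,
      mul_one, smul_sub, neg_smul, sub_eq_add_neg]
  rw [hK, Matrix.exp_add_of_commute _ _ ((Commute.one_right _).smul_right _),
    isIdempotentElem_inv_card_smul_of_one.exp_smul, IsIdempotentElem.one.exp_smul,
    ← Complex.exp_eq_exp_ℂ]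
  simp only [sub_smul, one_smul, add_sub_cancel, mul_smul_comm, mul_one, smul_smul,
    div_eq_mul_inv]

theorem abs_one_sub_two_div_card_le_norm_exp_adjMatrix_completeGraph (t : ℝ) (v : V) :
    |1 - 2 / (Fintype.card V : ℝ)| ≤
      ‖exp ((Complex.I * t) • (completeGraph V).adjMatrix ℂ) v v‖ := by
  have : Nonempty V := ⟨v⟩
  have hN : (1 : ℝ) ≤ Fintype.card V := by exact_mod_cast Fintype.card_pos
  rw [exp_smul_adjMatrix_completeGraph]
  simp only [Matrix.smul_apply, Matrix.add_apply, one_apply_eq, smul_eq_mul, of_apply,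
    Pi.one_apply, mul_one]
  rw [norm_mul, ← mul_neg, ← Complex.ofReal_neg, Complex.norm_exp_I_mul_ofReal, one_mul,
    ← Complex.ofReal_natCast, mul_assoc, ← Complex.ofReal_mul]
  exact abs_one_sub_two_div_le_norm_one_add_sub_one_div hN (Complex.norm_exp_I_mul_ofReal _)

end SimpleGraph

theorem stmt_19_general (m : ℕ) (n : Fin m → ℕ)
    (A : Matrix ((j : Fin m) → Fin (n j)) ((j : Fin m) → Fin (n j)) ℂ)
    (hA : A = Matrix.of fun x y =>
      if (Finset.univ.filter fun j => x j ≠ y j).card = 1 then 1 else 0)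
    (w : (j : Fin m) → Fin (n j)) (t : ℝ) :
    ∏ j, (1 - 2 / (n j : ℝ)) ≤
      ‖(NormedSpace.exp ((Complex.I * t) • A)) w w‖ := by
  have hexp : NormedSpace.exp ((Complex.I * t) • A) = piKronecker fun j =>
      NormedSpace.exp ((Complex.I * t) • (completeGraph (Fin (n j))).adjMatrix ℂ) := by
    rw [hA, ← piKroneckerSum_adjMatrix_completeGraph, smul_piKroneckerSum, exp_piKroneckerSum]
  rw [hexp, piKronecker_apply, norm_prod]
  calc ∏ j, (1 - 2 / (n j : ℝ)) ≤ |∏ j, (1 - 2 / (n j : ℝ))| := le_abs_self _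
    _ = ∏ j, |1 - 2 / (n j : ℝ)| := Finset.abs_prod _ _
    _ ≤ _ := Finset.prod_le_prod (fun _ _ => abs_nonneg _) fun j _ => by
        simpa using abs_one_sub_two_div_card_le_norm_exp_adjMatrix_completeGraph t (w j)

/-- For the Cartesian product `X = □_{j=1}^m K_{n_j}` of complete graphs with each
`n_j ≥ 3`, with adjacency Hamiltonian, every vertex `w` satisfies
`|U(t)_{w,w}| ≥ ∏_j (1 − 2/n_j)` for all `t`. -/
theorem stmt_19 (m : ℕ) (n : Fin m → ℕ) (hn : ∀ j, 3 ≤ n j)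
    (A : Matrix ((j : Fin m) → Fin (n j)) ((j : Fin m) → Fin (n j)) ℂ)
    (hA : A = Matrix.of fun x y =>
      if (Finset.univ.filter fun j => x j ≠ y j).card = 1 then 1 else 0)
    (w : (j : Fin m) → Fin (n j)) (t : ℝ) :
    ∏ j, (1 - 2 / (n j : ℝ)) ≤
      ‖(NormedSpace.exp ((Complex.I * t) • A)) w w‖ :=
  stmt_19_general m n A hA w t
end
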